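/- arXiv:2509.06866 — 3 statements merged into one kernel-verified Lean document; each statement's English description precedes it below -/
import Mathlib

section
/- Let n ≥ 2 and let V denote the real vector space of quadruples (u,b,M,Q) where u,b ∈ ℝⁿ, M is a trace-free symmetric real n×n matrix, and Q is a skew-symmetric real n×n matrix. Let K ⊂ V be the set of quadruples (u,b,M,Q) with |u| = |b| = 1, M = u ⊗ u − b ⊗ b, and Q = b ⊗ u − u ⊗ b. Then 0 lies in the interior, relative to V, of the convex hull of K; that is, there exists ε > 0 such that every (u,b,M,Q) ∈ V with norm less than ε belongs to the convex hull of K. -/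
/-!
Every admissible `z = (u, b, M, Q)` (in ideal MHD, `u` is the velocity and `b` the magnetic
field) is a combination `∑ aₖ • gₖ` of fixed generators
`(eᵢ, 0, 0, 0)`, `(0, eᵢ, 0, 0)`, `(0, 0, Sᵢⱼ, 0)`, `(0, 0, 0, Aᵢⱼ)` whose coefficients are
coordinates of `z`. Each generator satisfies `c • g ∈ conv K` for `|c| ≤ 1`, because both `g` and
`-g` are averages of points of `K` obtained by changing the signs of `u` and `b` or swapping them;
the off-diagonal symmetric units `eᵢ ⊗ eⱼ + eⱼ ⊗ eᵢ` are of the form `u ⊗ u - b ⊗ b` with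
`u, b = (eᵢ ± eⱼ)/√2`. Convexity then puts `z` in `(∑ |aₖ|) • conv K`, and `∑ |aₖ| ≤ 1` as soon
as `z` is small enough.
-/

open Finset Matrix
open scoped Pointwise

section ConvexScaling

variable {E ι : Type*} [AddCommGroup E] [Module ℝ E] {C : Set E}

theorem Convex.smul_mem_of_neg_mem (hC : Convex ℝ C) {x : E} (hx : x ∈ C) (hnx : -x ∈ C)
    {c : ℝ} (hc : |c| ≤ 1) : c • x ∈ C := by
  obtain ⟨hc₁, hc₂⟩ := abs_le.1 hc
  convert hC hx hnx (a := (1 + c) / 2) (b := (1 - c) / 2) (by linarith) (by linarith) (by ring)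
    using 1
  module

theorem Convex.inv_two_smul_add_mem (hC : Convex ℝ C) {x y : E} (hx : x ∈ C) (hy : y ∈ C) :
    (2⁻¹ : ℝ) • (x + y) ∈ C := by
  rw [smul_add]
  exact hC hx hy (by norm_num) (by norm_num) (by norm_num)

theorem smul_mem_abs_smul_set {g : E} (hg : ∀ c : ℝ, |c| ≤ 1 → c • g ∈ C) (a : ℝ) :
    a • g ∈ |a| • C := by
  rcases eq_or_ne a 0 with rfl | ha
  · exact ⟨0 • g, hg 0 (by simp), by simp⟩
  · have ha' : |a| ≠ 0 := abs_ne_zero.2 ha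
    refine ⟨(a / |a|) • g, hg _ (by simp [abs_div, ha']), ?_⟩
    simp only [smul_smul, mul_div_cancel₀ _ ha']

theorem Convex.sum_mem_sum_smul (hC : Convex ℝ C) (hCne : C.Nonempty) {s : Finset ι}
    {x : ι → E} {r : ι → ℝ} (hr : ∀ k ∈ s, 0 ≤ r k) (hx : ∀ k ∈ s, x k ∈ r k • C) :
    ∑ k ∈ s, x k ∈ (∑ k ∈ s, r k) • C := by
  classical
  induction s using Finset.induction_on with
  | empty => simp [Set.zero_smul_set hCne]
  | insert k s hk ih =>
    rw [sum_insert hk, sum_insert hk, hC.add_smul (hr k (mem_insert_self k s))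
      (sum_nonneg fun j hj => hr j (mem_insert_of_mem hj))]
    exact Set.add_mem_add (hx k (mem_insert_self k s))
      (ih (fun j hj => hr j (mem_insert_of_mem hj)) fun j hj => hx j (mem_insert_of_mem hj))

theorem Convex.sum_smul_mem_sum_abs_smul (hC : Convex ℝ C) (hCne : C.Nonempty) {s : Finset ι}
    {g : ι → E} (hg : ∀ k ∈ s, ∀ c : ℝ, |c| ≤ 1 → c • g k ∈ C) (a : ι → ℝ) :
    ∑ k ∈ s, a k • g k ∈ (∑ k ∈ s, |a k|) • C :=
  hC.sum_mem_sum_smul hCne (fun _ _ => abs_nonneg _) fun k hk =>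
    smul_mem_abs_smul_set (hg k hk) (a k)

theorem Convex.mem_of_mem_smul (hC : Convex ℝ C) (h0 : 0 ∈ C) {r : ℝ} (hr₀ : 0 ≤ r)
    (hr₁ : r ≤ 1) {x : E} (hx : x ∈ r • C) : x ∈ C := by
  obtain ⟨y, hy, rfl⟩ := hx
  exact hC.smul_mem_of_zero_mem h0 hy ⟨hr₀, hr₁⟩

end ConvexScaling

theorem vecMulVec_add_vecMulVec_swap {m : Type*} (x y : m → ℝ) :
    vecMulVec x y + vecMulVec y x =
      vecMulVec ((√2)⁻¹ • (x + y)) ((√2)⁻¹ • (x + y))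
        - vecMulVec ((√2)⁻¹ • (x - y)) ((√2)⁻¹ • (x - y)) := by
  have h : (√2)⁻¹ * (√2)⁻¹ = (2 : ℝ)⁻¹ := by rw [← mul_inv, Real.mul_self_sqrt zero_le_two]
  ext p q
  simp only [Matrix.add_apply, Matrix.sub_apply, vecMulVec_apply, Pi.smul_apply, Pi.add_apply,
    Pi.sub_apply, smul_eq_mul]
  linear_combination (-(x p + y p) * (x q + y q) + (x p - y p) * (x q - y q)) * h

theorem inv_sqrt_two_smul_add_dotProduct_self {m : Type*} [Fintype m] {x y : m → ℝ}
    (hx : x ⬝ᵥ x = 1) (hy : y ⬝ᵥ y = 1) (hxy : x ⬝ᵥ y = 0) :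
    ((√2)⁻¹ • (x + y)) ⬝ᵥ ((√2)⁻¹ • (x + y)) = 1 := by
  have h : (√2)⁻¹ * (√2)⁻¹ = (2 : ℝ)⁻¹ := by rw [← mul_inv, Real.mul_self_sqrt zero_le_two]
  simp only [smul_dotProduct, dotProduct_smul, add_dotProduct, dotProduct_add, hx, hy, hxy,
    dotProduct_comm y x, smul_eq_mul]
  linear_combination 2 * h

theorem sum_abs_le_card_mul_of_sum_sq_le {ι : Type*} [Fintype ι] (f : ι → ℝ) {ε : ℝ}
    (hε : 0 ≤ ε) (h : ∑ i, f i ^ 2 ≤ ε ^ 2) : ∑ i, |f i| ≤ Fintype.card ι * ε := by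
  have hf (i : ι) : |f i| ≤ ε :=
    abs_le_of_sq_le_sq ((single_le_sum (fun j _ => sq_nonneg (f j)) (mem_univ i)).trans h) hε
  simpa using sum_le_card_nsmul univ (fun i => |f i|) ε fun i _ => hf i

theorem Matrix.sum_sum_abs_le_of_sum_sum_sq_le {m : Type*} [Fintype m] (A : Matrix m m ℝ)
    {ε : ℝ} (hε : 0 ≤ ε) (h : ∑ i, ∑ j, A i j ^ 2 ≤ ε ^ 2) :
    ∑ i, ∑ j, |A i j| ≤ Fintype.card m ^ 2 * ε := by
  have := sum_abs_le_card_mul_of_sum_sq_le (fun p : m × m => A p.1 p.2) hε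
    (by simpa only [Fintype.sum_prod_type] using h)
  simpa only [Fintype.sum_prod_type, Fintype.card_prod, Nat.cast_mul, sq] using this

namespace MHD

abbrev V (n : ℕ) :=
  (Fin n → ℝ) × (Fin n → ℝ) × Matrix (Fin n) (Fin n) ℝ × Matrix (Fin n) (Fin n) ℝ

def K (n : ℕ) : Set (V n) :=
  {z | (∑ i, (z.1 i) ^ 2) = 1 ∧ (∑ i, (z.2.1 i) ^ 2) = 1 ∧
    (∀ i j, z.2.2.1 i j = z.1 i * z.1 j - z.2.1 i * z.2.1 j) ∧
    (∀ i j, z.2.2.2 i j = z.2.1 i * z.1 j - z.1 i * z.2.1 j)}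

variable {n : ℕ} {u b : Fin n → ℝ}

def kPoint (u b : Fin n → ℝ) : V n :=
  (u, b, vecMulVec u u - vecMulVec b b, vecMulVec b u - vecMulVec u b)

theorem kPoint_mem_convexHull (hu : u ⬝ᵥ u = 1) (hb : b ⬝ᵥ b = 1) :
    kPoint u b ∈ convexHull ℝ (K n) :=
  subset_convexHull ℝ _
    ⟨by simpa [kPoint, dotProduct, sq] using hu, by simpa [kPoint, dotProduct, sq] using hb,
      fun _ _ => rfl, fun _ _ => rfl⟩

theorem velocity_mem_convexHull (hu : u ⬝ᵥ u = 1) :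
    ((u, 0, 0, 0) : V n) ∈ convexHull ℝ (K n) := by
  have hnu : -u ⬝ᵥ -u = 1 := by simpa using hu
  convert (convex_convexHull ℝ _).inv_two_smul_add_mem
    (kPoint_mem_convexHull hu hu) (kPoint_mem_convexHull hu hnu) using 1
  simp only [kPoint, vecMulVec_neg, neg_vecMulVec, neg_neg, Prod.mk_add_mk, Prod.smul_mk,
    Prod.mk.injEq]
  refine ⟨?_, ?_, ?_, ?_⟩ <;> module

theorem field_mem_convexHull (hb : b ⬝ᵥ b = 1) :
    ((0, b, 0, 0) : V n) ∈ convexHull ℝ (K n) := by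
  have hnb : -b ⬝ᵥ -b = 1 := by simpa using hb
  convert (convex_convexHull ℝ _).inv_two_smul_add_mem
    (kPoint_mem_convexHull hb hb) (kPoint_mem_convexHull hnb hb) using 1
  simp only [kPoint, vecMulVec_neg, neg_vecMulVec, neg_neg, Prod.mk_add_mk, Prod.smul_mk,
    Prod.mk.injEq]
  refine ⟨?_, ?_, ?_, ?_⟩ <;> module

theorem symm_mem_convexHull (hu : u ⬝ᵥ u = 1) (hb : b ⬝ᵥ b = 1) :
    ((0, 0, vecMulVec u u - vecMulVec b b, 0) : V n) ∈ convexHull ℝ (K n) := by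
  have hnu : -u ⬝ᵥ -u = 1 := by simpa using hu
  have hnb : -b ⬝ᵥ -b = 1 := by simpa using hb
  have hC := convex_convexHull ℝ (K n)
  convert hC.inv_two_smul_add_mem
    (hC.inv_two_smul_add_mem (kPoint_mem_convexHull hu hb) (kPoint_mem_convexHull hnu hnb))
    (hC.inv_two_smul_add_mem (kPoint_mem_convexHull hnu hb) (kPoint_mem_convexHull hu hnb))
    using 1
  simp only [kPoint, vecMulVec_neg, neg_vecMulVec, neg_neg, Prod.mk_add_mk, Prod.smul_mk,
    Prod.mk.injEq]
  refine ⟨?_, ?_, ?_, ?_⟩ <;> module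

theorem skew_mem_convexHull (hu : u ⬝ᵥ u = 1) (hb : b ⬝ᵥ b = 1) :
    ((0, 0, 0, vecMulVec b u - vecMulVec u b) : V n) ∈ convexHull ℝ (K n) := by
  have hnu : -u ⬝ᵥ -u = 1 := by simpa using hu
  have hnb : -b ⬝ᵥ -b = 1 := by simpa using hb
  have hC := convex_convexHull ℝ (K n)
  convert hC.inv_two_smul_add_mem
    (hC.inv_two_smul_add_mem (kPoint_mem_convexHull hu hb) (kPoint_mem_convexHull hnu hnb))
    (hC.inv_two_smul_add_mem (kPoint_mem_convexHull hb hnu) (kPoint_mem_convexHull hnb hu))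
    using 1
  simp only [kPoint, vecMulVec_neg, neg_vecMulVec, neg_neg, Prod.mk_add_mk, Prod.smul_mk,
    Prod.mk.injEq]
  refine ⟨?_, ?_, ?_, ?_⟩ <;> module

theorem smul_velocity_mem_convexHull (hu : u ⬝ᵥ u = 1) {c : ℝ} (hc : |c| ≤ 1) :
    c • ((u, 0, 0, 0) : V n) ∈ convexHull ℝ (K n) :=
  (convex_convexHull ℝ _).smul_mem_of_neg_mem (velocity_mem_convexHull hu)
    (by simpa using velocity_mem_convexHull (u := -u) (by simpa using hu)) hc

theorem smul_field_mem_convexHull (hb : b ⬝ᵥ b = 1) {c : ℝ} (hc : |c| ≤ 1) :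
    c • ((0, b, 0, 0) : V n) ∈ convexHull ℝ (K n) :=
  (convex_convexHull ℝ _).smul_mem_of_neg_mem (field_mem_convexHull hb)
    (by simpa using field_mem_convexHull (b := -b) (by simpa using hb)) hc

theorem smul_symm_mem_convexHull (hu : u ⬝ᵥ u = 1) (hb : b ⬝ᵥ b = 1) {c : ℝ}
    (hc : |c| ≤ 1) : c • ((0, 0, vecMulVec u u - vecMulVec b b, 0) : V n) ∈ convexHull ℝ (K n) :=
  (convex_convexHull ℝ _).smul_mem_of_neg_mem (symm_mem_convexHull hu hb)
    (by simpa using symm_mem_convexHull hb hu) hc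

theorem smul_skew_mem_convexHull (hu : u ⬝ᵥ u = 1) (hb : b ⬝ᵥ b = 1) {c : ℝ}
    (hc : |c| ≤ 1) : c • ((0, 0, 0, vecMulVec b u - vecMulVec u b) : V n) ∈ convexHull ℝ (K n) :=
  (convex_convexHull ℝ _).smul_mem_of_neg_mem (skew_mem_convexHull hu hb)
    (by simpa using skew_mem_convexHull hb hu) hc

/-- The correction `Eᵢ₀ᵢ₀` makes the diagonal generators trace-free; in `sum_smul_symmGen` the
corrections add up to `(trace M) • Eᵢ₀ᵢ₀ = 0`. -/
noncomputable def symmGen (i₀ i j : Fin n) : Matrix (Fin n) (Fin n) ℝ :=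
  (2⁻¹ : ℝ) • (vecMulVec (Pi.single i 1) (Pi.single j 1)
      + vecMulVec (Pi.single j 1) (Pi.single i 1))
    - if i = j then vecMulVec (Pi.single i₀ 1) (Pi.single i₀ 1) else 0

noncomputable def skewGen (i j : Fin n) : Matrix (Fin n) (Fin n) ℝ :=
  (2⁻¹ : ℝ) • (vecMulVec (Pi.single i 1) (Pi.single j 1)
    - vecMulVec (Pi.single j 1) (Pi.single i 1))

theorem sum_smul_symmGen (i₀ : Fin n) {M : Matrix (Fin n) (Fin n) ℝ}
    (hM : ∀ i j, M i j = M j i) (htr : ∑ i, M i i = 0) :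
    ∑ i, ∑ j, M i j • symmGen i₀ i j = M := by
  ext p q
  simp only [Matrix.sum_apply, symmGen, Matrix.smul_apply, Matrix.sub_apply, Matrix.add_apply,
    vecMulVec_apply, Pi.single_apply, smul_eq_mul,
    apply_ite (fun A : Matrix (Fin n) (Fin n) ℝ => A p q), Matrix.zero_apply]
  simp only [mul_ite, mul_one, mul_zero, mul_add, mul_sub, sum_sub_distrib, sum_add_distrib,
    sum_ite_eq, mem_univ, if_true, sum_ite_irrel, sum_const_zero, htr, ite_self, sub_zero]
  rw [hM q p]
  ring

theorem sum_smul_skewGen {Q : Matrix (Fin n) (Fin n) ℝ} (hQ : ∀ i j, Q i j = - Q j i) :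
    ∑ i, ∑ j, Q i j • skewGen i j = Q := by
  ext p q
  simp only [Matrix.sum_apply, skewGen, Matrix.smul_apply, Matrix.sub_apply, vecMulVec_apply,
    Pi.single_apply, smul_eq_mul]
  simp only [mul_ite, mul_one, mul_zero, mul_sub, sum_sub_distrib, sum_ite_eq, mem_univ, if_true,
    sum_ite_irrel, sum_const_zero]
  rw [hQ q p]
  ring

theorem symmGen_self (i₀ i : Fin n) :
    symmGen i₀ i i =
      vecMulVec (Pi.single i 1) (Pi.single i 1) - vecMulVec (Pi.single i₀ 1) (Pi.single i₀ 1) := by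
  rw [symmGen, if_pos rfl, ← two_smul ℝ, smul_smul, inv_mul_cancel₀ two_ne_zero, one_smul]

theorem symmGen_of_ne (i₀ : Fin n) {i j : Fin n} (hij : i ≠ j) :
    symmGen i₀ i j = (2⁻¹ : ℝ) • (vecMulVec (Pi.single i 1) (Pi.single j 1)
      + vecMulVec (Pi.single j 1) (Pi.single i 1)) := by
  rw [symmGen, if_neg hij, sub_zero]

theorem smul_symmGen_mem_convexHull (i₀ i j : Fin n) {c : ℝ} (hc : |c| ≤ 1) :
    c • ((0, 0, symmGen i₀ i j, 0) : V n) ∈ convexHull ℝ (K n) := by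
  rcases eq_or_ne i j with rfl | hij
  · rw [symmGen_self]
    exact smul_symm_mem_convexHull (by simp) (by simp) hc
  · rw [symmGen_of_ne i₀ hij, vecMulVec_add_vecMulVec_swap]
    set x : Fin n → ℝ := Pi.single i 1
    set y : Fin n → ℝ := Pi.single j 1
    have hx : x ⬝ᵥ x = 1 := by simp [x]
    have hy : y ⬝ᵥ y = 1 := by simp [y]
    have hxy : x ⬝ᵥ y = 0 := by simp [x, y, hij.symm]
    have hv := inv_sqrt_two_smul_add_dotProduct_self hx hy hxy
    have hw : ((√2)⁻¹ • (x - y)) ⬝ᵥ ((√2)⁻¹ • (x - y)) = 1 := by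
      rw [sub_eq_add_neg]
      exact inv_sqrt_two_smul_add_dotProduct_self hx (by simpa using hy) (by simpa using hxy)
    convert smul_symm_mem_convexHull hv hw (c := c / 2) (by rw [abs_div, abs_two]; linarith)
      using 1
    simp only [Prod.smul_mk, smul_zero, smul_smul, div_eq_mul_inv]

theorem smul_skewGen_mem_convexHull (i j : Fin n) {c : ℝ} (hc : |c| ≤ 1) :
    c • ((0, 0, 0, skewGen i j) : V n) ∈ convexHull ℝ (K n) := by
  convert smul_skew_mem_convexHull (n := n) (u := Pi.single j 1) (b := Pi.single i 1)
      (by simp) (by simp) (c := c / 2) (by rw [abs_div, abs_two]; linarith) using 1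
  simp [skewGen, smul_smul, div_eq_mul_inv]

theorem zero_mem_convexHull_K (i₀ : Fin n) : (0 : V n) ∈ convexHull ℝ (K n) := by
  simpa using smul_velocity_mem_convexHull (n := n) (u := Pi.single i₀ 1) (by simp) (c := 0)
    (by simp)

theorem eq_sum_smul_generators (i₀ : Fin n) (u b : Fin n → ℝ) {M Q : Matrix (Fin n) (Fin n) ℝ}
    (hM : ∀ i j, M i j = M j i) (htr : ∑ i, M i i = 0) (hQ : ∀ i j, Q i j = - Q j i) :
    ((u, b, M, Q) : V n) = ∑ i, u i • ((Pi.single i 1, 0, 0, 0) : V n)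
      + ∑ i, b i • ((0, Pi.single i 1, 0, 0) : V n)
      + ∑ i, ∑ j, M i j • ((0, 0, symmGen i₀ i j, 0) : V n)
      + ∑ i, ∑ j, Q i j • ((0, 0, 0, skewGen i j) : V n) := by
  simp [Prod.ext_iff, Prod.fst_sum, Prod.snd_sum, sum_smul_symmGen i₀ hM htr, sum_smul_skewGen hQ,
    funext_iff, Finset.sum_apply, Pi.single_apply]

theorem mem_smul_convexHull_K (i₀ : Fin n) (u b : Fin n → ℝ) {M Q : Matrix (Fin n) (Fin n) ℝ}
    (hM : ∀ i j, M i j = M j i) (htr : ∑ i, M i i = 0) (hQ : ∀ i j, Q i j = - Q j i) :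
    ((u, b, M, Q) : V n) ∈ (∑ i, |u i| + ∑ i, |b i| + ∑ i, ∑ j, |M i j| + ∑ i, ∑ j, |Q i j|)
      • convexHull ℝ (K n) := by
  have hC := convex_convexHull ℝ (K n)
  have hCne : (convexHull ℝ (K n)).Nonempty := ⟨0, zero_mem_convexHull_K i₀⟩
  rw [eq_sum_smul_generators i₀ u b hM htr hQ, hC.add_smul (by positivity) (by positivity),
    hC.add_smul (by positivity) (by positivity), hC.add_smul (by positivity) (by positivity)]
  refine Set.add_mem_add (Set.add_mem_add (Set.add_mem_add ?_ ?_) ?_) ?_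
  · exact hC.sum_smul_mem_sum_abs_smul hCne (fun _ _ _ => smul_velocity_mem_convexHull (by simp)) u
  · exact hC.sum_smul_mem_sum_abs_smul hCne (fun _ _ _ => smul_field_mem_convexHull (by simp)) b
  · exact hC.sum_mem_sum_smul hCne (fun _ _ => by positivity) fun i _ =>
      hC.sum_smul_mem_sum_abs_smul hCne (fun j _ _ => smul_symmGen_mem_convexHull i₀ i j) (M i)
  · exact hC.sum_mem_sum_smul hCne (fun _ _ => by positivity) fun i _ =>
      hC.sum_smul_mem_sum_abs_smul hCne (fun j _ _ => smul_skewGen_mem_convexHull i j) (Q i)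

theorem sum_abs_le_of_sum_sq_le (u b : Fin n → ℝ) (M Q : Matrix (Fin n) (Fin n) ℝ) {ε : ℝ}
    (hε : 0 ≤ ε)
    (h : ∑ i, u i ^ 2 + ∑ i, b i ^ 2 + ∑ i, ∑ j, M i j ^ 2 + ∑ i, ∑ j, Q i j ^ 2 ≤ ε ^ 2) :
    ∑ i, |u i| + ∑ i, |b i| + ∑ i, ∑ j, |M i j| + ∑ i, ∑ j, |Q i j|
      ≤ (2 * n + 2 * n ^ 2) * ε := by
  have hu : 0 ≤ ∑ i, u i ^ 2 := by positivity
  have hb : 0 ≤ ∑ i, b i ^ 2 := by positivity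
  have hM : 0 ≤ ∑ i, ∑ j, M i j ^ 2 := by positivity
  have hQ : 0 ≤ ∑ i, ∑ j, Q i j ^ 2 := by positivity
  have := sum_abs_le_card_mul_of_sum_sq_le u hε (by linarith)
  have := sum_abs_le_card_mul_of_sum_sq_le b hε (by linarith)
  have := M.sum_sum_abs_le_of_sum_sum_sq_le hε (by linarith)
  have := Q.sum_sum_abs_le_of_sum_sum_sq_le hε (by linarith)
  simp only [Fintype.card_fin] at *
  linarith

end MHD

/-- **Lemma 3.1.** For `n ≥ 2`, the origin lies in the interior, relative to the space `V` of
quadruples `(u,b,M,Q)` with `M` trace-free symmetric and `Q` skew-symmetric, of the convex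
hull of the constitutive set
`K = {(u,b,M,Q) : |u| = |b| = 1, M = u ⊗ u − b ⊗ b, Q = b ⊗ u − u ⊗ b}`:
there is `ε > 0` such that every such quadruple of Euclidean norm `< ε` belongs to the
convex hull of `K`. -/
theorem zero_mem_relative_interior_convexHull_K (n : ℕ) (hn : 2 ≤ n) :
    ∃ ε : ℝ, 0 < ε ∧
      ∀ (u b : Fin n → ℝ) (M Q : Matrix (Fin n) (Fin n) ℝ),
        (∀ i j, M i j = M j i) → (∑ i, M i i) = 0 →
        (∀ i j, Q i j = - Q j i) →
        ((∑ i, (u i) ^ 2) + (∑ i, (b i) ^ 2)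
          + (∑ i, ∑ j, (M i j) ^ 2) + (∑ i, ∑ j, (Q i j) ^ 2)) < ε ^ 2 →
        (u, b, M, Q) ∈ convexHull ℝ
          {z : (Fin n → ℝ) × (Fin n → ℝ) ×
              Matrix (Fin n) (Fin n) ℝ × Matrix (Fin n) (Fin n) ℝ |
            (∑ i, (z.1 i) ^ 2) = 1 ∧ (∑ i, (z.2.1 i) ^ 2) = 1 ∧
            (∀ i j, z.2.2.1 i j = z.1 i * z.1 j - z.2.1 i * z.2.1 j) ∧
            (∀ i j, z.2.2.2 i j = z.2.1 i * z.1 j - z.1 i * z.2.1 j)} := by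
  set N : ℝ := 2 * n + 2 * n ^ 2
  have hN : 0 < N := by positivity
  refine ⟨N⁻¹, inv_pos.2 hN, fun u b M Q hM htr hQ hnorm => ?_⟩
  have i₀ : Fin n := ⟨0, by omega⟩
  refine (convex_convexHull ℝ _).mem_of_mem_smul (MHD.zero_mem_convexHull_K i₀) (by positivity)
    ?_ (MHD.mem_smul_convexHull_K i₀ u b hM htr hQ)
  calc _ ≤ N * N⁻¹ := MHD.sum_abs_le_of_sum_sq_le u b M Q (by positivity) hnorm.le
    _ = 1 := mul_inv_cancel₀ hN.ne'
end

section
/- Let n ≥ 4. Let V denote the real vector space of quadruples (u,b,M,Q) where u,b ∈ ℝⁿ, M is trace-free symmetric n×n, and Q is skew-symmetric n×n; let K ⊂ V be the set of such quadruples with |u| = |b| = 1, M = u ⊗ u − b ⊗ b, Q = b ⊗ u − u ⊗ b; let K^co be the convex hull of K, and let 𝒰 be the interior, relative to V × ℝ, of K^co × [−1,1]. Let Λ be the wave cone: the set of (u,b,M,Q,q) ∈ V × ℝ for which there exists (ζ,s) ∈ ℝⁿ × ℝ with (ζ,s) ≠ 0 such that (M + q Iₙ)ζ + s u = 0, u ·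 ζ = 0, Qζ + s b = 0, and b · ζ = 0. Then for every m ∈ (1,∞) there exists a constant C₀ > 0, depending only on n and m, such that for every z = (u,b,M,Q,q) ∈ 𝒰 there exists z̄ = (ū,b̄,M̄,Q̄,0) ∈ Λ with z̄ ≠ 0 satisfying: (i) the segment σ = { z + s z̄ : |s| ≤ 1 } is contained in 𝒰 and dist(σ, ∂𝒰) ≥ (1/2) dist(z, ∂𝒰) (i.e. 𝒰 has 1/2-relaxed local convexity at z in the wave-cone direction z̄); (ii) for every ε ∈ (0,1), ε^{m−1} ( 2 − |u|^m − |b|^m ) ≤ C₀ |(ū,b̄)|^m + 2 ε^m. -/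
/-!
Write `z.1 = ∑ wᵢ kᵢ` as a Carathéodory combination of at most `N = dim V + 1` points of `K`.
The seminorm `p(u, b, M, Q) = |u| + |b|` equals `2` on `K`, so the triangle inequality gives
`2 - p(z.1) ≤ ∑ᵢⱼ wᵢ wⱼ p(kᵢ - kⱼ)`, and some pair satisfies `2 - p(z.1) ≤ N² t p(kᵢ - kⱼ)` with
`t = min(wᵢ, wⱼ)`. Moving weight `c ∈ [-t, t]` from `kⱼ` to `kᵢ` keeps `z.1 + c (kᵢ - kⱼ)` in
`K^co`, and since `z` is interior, `(1 + ε) z.1 ∈ K^co` forces `p(z.1) < 2`, so `kᵢ ≠ kⱼ`.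
Differences of points of `K` lie in the wave cone: for `n ≥ 4` pick `ζ ≠ 0` orthogonal to
`uᵢ - uⱼ`, `bᵢ`, `bⱼ` and `s = -uᵢ · ζ`; then `Mζ = -s u` and `Qζ = -s b` on both points.

The direction is `z̄ = (t/2) (kᵢ - kⱼ, 0)`. Each `z + s z̄` is the midpoint of `z` and a point `c`
of the convex set `K^co × [-1, 1]`; the reflection `y ↦ 2y - c` maps `∂𝒰` into itself, whence
`dist(z, ∂𝒰) ≤ 2 dist(z + s z̄, ∂𝒰)`. Part (ii) combines Bernoulli's inequality
`1 - a^m ≤ m (1 - a)` with a case split on whether `2 - |u|^m - |b|^m ≤ 2ε`.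
-/

open MeasureTheory

/-- The state space: quadruples `(u, b, M, Q)` with matrices recorded as elements of
`EuclideanSpace ℝ (Fin n × Fin n)` (Frobenius norm). -/
abbrev MHDState (n : ℕ) :=
  (EuclideanSpace ℝ (Fin n)) × (EuclideanSpace ℝ (Fin n)) ×
    (EuclideanSpace ℝ (Fin n × Fin n)) × (EuclideanSpace ℝ (Fin n × Fin n))

/-- Membership in the linear space `V`: `M` symmetric trace-free, `Q` skew-symmetric. -/
def MHDInV (n : ℕ) (z : MHDState n) : Prop :=
  (∀ i j, z.2.2.1 (i, j) = z.2.2.1 (j, i)) ∧ (∑ i, z.2.2.1 (i, i)) = 0 ∧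
  (∀ i j, z.2.2.2 (i, j) = - z.2.2.2 (j, i))

/-- The constitutive set `K`. -/
def MHDK (n : ℕ) : Set (MHDState n) :=
  {z | ‖z.1‖ = 1 ∧ ‖z.2.1‖ = 1 ∧
    (∀ i j, z.2.2.1 (i, j) = z.1 i * z.1 j - z.2.1 i * z.2.1 j) ∧
    (∀ i j, z.2.2.2 (i, j) = z.2.1 i * z.1 j - z.1 i * z.2.1 j)}

/-- The relaxed set `𝒰`: the interior, relative to `V × ℝ`, of `K^co × [-1,1]`. -/
def MHDU (n : ℕ) : Set (MHDState n × ℝ) :=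
  {z | MHDInV n z.1 ∧ ∃ ρ : ℝ, 0 < ρ ∧ ∀ w : MHDState n × ℝ, MHDInV n w.1 →
    ‖w - z‖ < ρ → w.1 ∈ convexHull ℝ (MHDK n) ∧ w.2 ∈ Set.Icc (-1 : ℝ) 1}

/-- The relative boundary `∂𝒰` of `𝒰` inside `V × ℝ` (for points of `𝒰`, the distance to
`∂𝒰` is the distance to the relative complement of `𝒰`). -/
def MHDBdry (n : ℕ) : Set (MHDState n × ℝ) :=
  {w | MHDInV n w.1} \ MHDU n

/-- The wave cone `Λ`: states annihilated by some nonzero `(ζ, s) ∈ ℝⁿ × ℝ`. -/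
def MHDLambda (n : ℕ) (z : MHDState n × ℝ) : Prop :=
  ∃ (ζ : EuclideanSpace ℝ (Fin n)) (s : ℝ), ¬ (ζ = 0 ∧ s = 0) ∧
    (∀ i, (∑ j, (z.1.2.2.1 (i, j) + z.2 * (if i = j then (1 : ℝ) else 0)) * ζ j)
      + s * z.1.1 i = 0) ∧
    (∑ i, z.1.1 i * ζ i) = 0 ∧
    (∀ i, (∑ j, z.1.2.2.2 (i, j) * ζ j) + s * z.1.2.1 i = 0) ∧
    (∑ i, z.1.2.1 i * ζ i) = 0

open Finset

section ConvexHullPairs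

variable {E : Type*} [AddCommGroup E] [Module ℝ E]

theorem Seminorm.sum_mul_apply_sub_apply_sum_le (p : Seminorm ℝ E) {ι : Type*} [Fintype ι]
    {w : ι → ℝ} (hw₀ : ∀ i, 0 ≤ w i) (hw₁ : ∑ i, w i = 1) (v : ι → E) :
    ∑ j, w j * p (v j) - p (∑ i, w i • v i) ≤ ∑ j, ∑ i, w j * w i * p (v j - v i) := by
  have hj : ∀ j, p (v j) - p (∑ i, w i • v i) ≤ ∑ i, w i * p (v j - v i) := fun j =>
    calc p (v j) - p (∑ i, w i • v i) ≤ p (v j - ∑ i, w i • v i) :=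
          sub_le_iff_le_add'.2 (le_map_add_map_sub p _ _)
      _ = p (∑ i, w i • (v j - v i)) := by
          simp only [smul_sub, sum_sub_distrib, ← sum_smul, hw₁, one_smul]
      _ ≤ ∑ i, p (w i • (v j - v i)) :=
          le_sum_of_subadditive p (map_zero p).le (map_add_le_add p) _ _
      _ = ∑ i, w i * p (v j - v i) := by
          simp only [map_smul_eq_mul, Real.norm_of_nonneg (hw₀ _)]
  calc ∑ j, w j * p (v j) - p (∑ i, w i • v i)
      = ∑ j, w j * (p (v j) - p (∑ i, w i • v i)) := by
        simp only [mul_sub, sum_sub_distrib, ← sum_mul, hw₁, one_mul]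
    _ ≤ ∑ j, w j * ∑ i, w i * p (v j - v i) := by
        gcongr with j; exacts [hw₀ j, hj j]
    _ = ∑ j, ∑ i, w j * w i * p (v j - v i) := by simp only [mul_sum, mul_assoc]

theorem sum_smul_add_smul_sub_mem_convexHull {ι : Type*} [Fintype ι] {s : Set E} {k : ι → E}
    (hk : ∀ i, k i ∈ s) {w : ι → ℝ} (hw₀ : ∀ i, 0 ≤ w i) (hw₁ : ∑ i, w i = 1) {i j : ι} {c : ℝ}
    (hc : |c| ≤ min (w i) (w j)) :
    ∑ l, w l • k l + c • (k i - k j) ∈ convexHull ℝ s := by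
  classical
  obtain rfl | hij := eq_or_ne i j
  · simpa using mem_convexHull_of_exists_fintype w k hw₀ hw₁ hk rfl
  obtain ⟨hci, hcj⟩ := le_min_iff.mp hc
  refine mem_convexHull_of_exists_fintype (w + Pi.single i c - Pi.single j c) k (fun l => ?_)
    ?_ hk ?_
  · rcases eq_or_ne l i with rfl | hli
    · simp only [Pi.sub_apply, Pi.add_apply, Pi.single_eq_same, Pi.single_eq_of_ne hij,
        sub_zero]
      linarith [neg_abs_le c]
    rcases eq_or_ne l j with rfl | hlj
    · simp only [Pi.sub_apply, Pi.add_apply, Pi.single_eq_of_ne hli, Pi.single_eq_same, add_zero]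
      linarith [le_abs_self c]
    simpa [hli, hlj] using hw₀ l
  · simp [sum_add_distrib, sum_sub_distrib, hw₁]
  · simp [add_smul, sub_smul, sum_add_distrib, sum_sub_distrib, smul_sub, add_sub_assoc]

theorem exists_pair_segment_mem_convexHull [FiniteDimensional ℝ E] (p : Seminorm ℝ E) {s : Set E}
    {r : ℝ} (hs : ∀ k ∈ s, p k = r) {x : E} (hx : x ∈ convexHull ℝ s) :
    ∃ k₁ ∈ s, ∃ k₂ ∈ s, ∃ t > 0,
      r - p x ≤ (Module.finrank ℝ E + 1) ^ 2 * t * p (k₁ - k₂) ∧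
      ∀ c : ℝ, |c| ≤ t → x + c • (k₁ - k₂) ∈ convexHull ℝ s := by
  obtain ⟨ι, _, k, w, hks, hk, hw₀, hw₁, rfl⟩ := eq_pos_convex_span_of_mem_convexHull hx
  replace hks : ∀ i, k i ∈ s := fun i => hks ⟨i, rfl⟩
  have hcard : (Fintype.card ι : ℝ) ≤ Module.finrank ℝ E + 1 := by
    exact_mod_cast hk.card_le_finrank_succ.trans
      (Nat.add_le_add_right (Submodule.finrank_le (vectorSpan ℝ (Set.range k))) 1)
  have hspread : r - p (∑ i, w i • k i) ≤ ∑ ij : ι × ι, w ij.1 * w ij.2 * p (k ij.1 - k ij.2) := by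
    simpa [hs _ (hks _), ← sum_mul, hw₁, ← Fintype.sum_prod_type'] using
      p.sum_mul_apply_sub_apply_sum_le (fun i => (hw₀ i).le) hw₁ k
  have hι : (univ : Finset (ι × ι)).Nonempty := by
    obtain ⟨i, -⟩ := nonempty_of_sum_ne_zero (hw₁.trans_ne one_ne_zero)
    exact ⟨(i, i), mem_univ _⟩
  obtain ⟨⟨i, j⟩, -, hmax⟩ :=
    exists_max_image univ (fun ij : ι × ι => w ij.1 * w ij.2 * p (k ij.1 - k ij.2)) hι
  have hwle : ∀ l, w l ≤ 1 := fun l => hw₁ ▸ single_le_sum (fun l _ => (hw₀ l).le) (mem_univ l)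
  refine ⟨k i, hks i, k j, hks j, min (w i) (w j), lt_min (hw₀ i) (hw₀ j), ?_,
    fun c hc => sum_smul_add_smul_sub_mem_convexHull hks (fun i => (hw₀ i).le) hw₁ hc⟩
  calc r - p (∑ i, w i • k i)
      ≤ (Fintype.card ι : ℝ) ^ 2 * (w i * w j * p (k i - k j)) := by
        refine hspread.trans ((sum_le_card_nsmul _ _ _ fun ij _ => hmax ij (mem_univ _)).trans ?_)
        simp [sq]
    _ ≤ (Module.finrank ℝ E + 1) ^ 2 * (min (w i) (w j) * p (k i - k j)) := by
        gcongr
        · exact mul_nonneg (mul_nonneg (hw₀ i).le (hw₀ j).le) (apply_nonneg _ _)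
        exact le_min (mul_le_of_le_one_right (hw₀ i).le (hwle j))
          (mul_le_of_le_one_left (hw₀ j).le (hwle i))
    _ = _ := by ring

end ConvexHullPairs

section RelativeInterior

variable {E : Type*} [NormedAddCommGroup E] [NormedSpace ℝ E] {W : Submodule ℝ E} {S : Set E}

def interiorIn (W : Submodule ℝ E) (S : Set E) : Set E :=
  {z | z ∈ W ∧ ∃ ρ : ℝ, 0 < ρ ∧ ∀ w ∈ W, ‖w - z‖ < ρ → w ∈ S}

def boundaryIn (W : Submodule ℝ E) (S : Set E) : Set E :=
  (W : Set E) \ interiorIn W S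

theorem mem_of_mem_interiorIn {z : E} (hz : z ∈ interiorIn W S) : z ∈ S := by
  obtain ⟨hzW, ρ, hρ, hball⟩ := hz
  exact hball z hzW (by simpa using hρ)

theorem exists_one_add_smul_mem_of_mem_interiorIn {z : E} (hz : z ∈ interiorIn W S) :
    ∃ ε : ℝ, 0 < ε ∧ (1 + ε) • z ∈ S := by
  obtain ⟨hzW, ρ, hρ, hball⟩ := hz
  have hε : 0 < ρ / (‖z‖ + 1) := by positivity
  refine ⟨ρ / (‖z‖ + 1), hε, hball _ (W.smul_mem _ hzW) ?_⟩
  rw [add_smul, one_smul, add_sub_cancel_left, norm_smul, Real.norm_of_nonneg hε.le]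
  calc ρ / (‖z‖ + 1) * ‖z‖ < ρ / (‖z‖ + 1) * (‖z‖ + 1) := by gcongr; linarith
    _ = ρ := div_mul_cancel₀ _ (by positivity)

theorem midpoint_mem_interiorIn (hS : Convex ℝ S) {z c : E} (hz : z ∈ interiorIn W S)
    (hcW : c ∈ W) (hcS : c ∈ S) : (2⁻¹ : ℝ) • (z + c) ∈ interiorIn W S := by
  obtain ⟨hzW, ρ, hρ, hball⟩ := hz
  refine ⟨W.smul_mem _ (W.add_mem hzW hcW), ρ / 2, half_pos hρ, fun w hwW hw => ?_⟩
  have hw' : (2 : ℝ) • w - c ∈ S := by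
    refine hball _ (W.sub_mem (W.smul_mem _ hwW) hcW) ?_
    have : (2 : ℝ) • w - c - z = (2 : ℝ) • (w - (2⁻¹ : ℝ) • (z + c)) := by module
    rw [this, norm_smul, Real.norm_two]
    linarith
  have := hS hw' hcS (by norm_num : (0 : ℝ) ≤ 2⁻¹) (by norm_num : (0 : ℝ) ≤ 2⁻¹) (by norm_num)
  convert this using 1
  module

theorem two_smul_sub_mem_boundaryIn (hS : Convex ℝ S) {y c : E} (hy : y ∈ boundaryIn W S)
    (hcW : c ∈ W) (hcS : c ∈ S) : (2 : ℝ) • y - c ∈ boundaryIn W S := by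
  refine ⟨W.sub_mem (W.smul_mem _ hy.1) hcW, fun h => hy.2 ?_⟩
  convert midpoint_mem_interiorIn hS h hcW hcS using 1
  module

theorem half_infDist_le_infDist_midpoint (hS : Convex ℝ S) (z : E) {c : E} (hcW : c ∈ W)
    (hcS : c ∈ S) :
    2⁻¹ * Metric.infDist z (boundaryIn W S) ≤
      Metric.infDist ((2⁻¹ : ℝ) • (z + c)) (boundaryIn W S) := by
  rcases (boundaryIn W S).eq_empty_or_nonempty with hB | hB
  · simp [hB]
  refine (Metric.le_infDist hB).2 fun y hy => ?_
  have := Metric.infDist_le_dist_of_mem (x := z) (two_smul_sub_mem_boundaryIn hS hy hcW hcS)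
  have h2 : dist z ((2 : ℝ) • y - c) = 2 * dist ((2⁻¹ : ℝ) • (z + c)) y := by
    rw [dist_eq_norm, dist_eq_norm,
      show z - ((2 : ℝ) • y - c) = (2 : ℝ) • ((2⁻¹ : ℝ) • (z + c) - y) by module,
      norm_smul, Real.norm_two]
  linarith

theorem add_smul_mem_interiorIn_and_half_infDist_le (hS : Convex ℝ S) {z d : E}
    (hz : z ∈ interiorIn W S) (hd : d ∈ W) (hseg : ∀ c : ℝ, |c| ≤ 2 → z + c • d ∈ S) {s : ℝ}
    (hs : |s| ≤ 1) :
    z + s • d ∈ interiorIn W S ∧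
      1 / 2 * Metric.infDist z (boundaryIn W S) ≤ Metric.infDist (z + s • d) (boundaryIn W S) := by
  have hcW : z + (2 * s) • d ∈ W := W.add_mem hz.1 (W.smul_mem _ hd)
  have hmid : z + s • d = (2⁻¹ : ℝ) • (z + (z + (2 * s) • d)) := by module
  have hcS : z + (2 * s) • d ∈ S := hseg _ (by rw [abs_mul, abs_two]; linarith)
  rw [hmid]
  exact ⟨midpoint_mem_interiorIn hS hz hcW hcS,
    one_div (2 : ℝ) ▸ half_infDist_le_infDist_midpoint hS z hcW hcS⟩

end RelativeInterior

theorem one_sub_rpow_le_mul_one_sub {a m : ℝ} (ha : 0 ≤ a) (hm : 1 ≤ m) :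
    1 - a ^ m ≤ m * (1 - a) := by
  have := one_add_mul_self_le_rpow_one_add (by linarith : -1 ≤ a - 1) hm
  rw [add_sub_cancel] at this
  linarith

theorem add_le_two_mul_sqrt_sq_add_sq (a b : ℝ) : a + b ≤ 2 * √(a ^ 2 + b ^ 2) := by
  have ha : a ≤ √(a ^ 2 + b ^ 2) := Real.le_sqrt_of_sq_le (by nlinarith [sq_nonneg b])
  have hb : b ≤ √(a ^ 2 + b ^ 2) := Real.le_sqrt_of_sq_le (by nlinarith [sq_nonneg a])
  linarith

theorem rpow_sub_one_mul_le_of_le {m ε A B : ℝ} (hm : 1 ≤ m) (hε : 0 < ε) (hAB : A ≤ B) (hB : 0 ≤ B) :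
    ε ^ (m - 1) * A ≤ 2 * (B / 2) ^ m + 2 * ε ^ m := by
  rcases le_or_gt A (2 * ε) with hA | hA
  · calc ε ^ (m - 1) * A ≤ ε ^ (m - 1) * (2 * ε) := by gcongr
      _ = 2 * ε ^ m := by rw [Real.rpow_sub_one hε.ne']; field_simp
      _ ≤ _ := by have := Real.rpow_nonneg (by linarith : 0 ≤ B / 2) m; linarith
  · have hBpos : 0 < B := by linarith
    calc ε ^ (m - 1) * A ≤ (B / 2) ^ (m - 1) * B := by gcongr <;> linarith
      _ = 2 * (B / 2) ^ m := by rw [Real.rpow_sub_one (by positivity)]; field_simp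
      _ ≤ _ := by have := Real.rpow_nonneg hε.le m; linarith

theorem rpow_sub_one_mul_two_sub_rpow_sub_rpow_le {m ε a b a' b' K : ℝ} (hm : 1 ≤ m)
    (hε : 0 < ε) (ha : 0 ≤ a) (hb : 0 ≤ b) (hK : 0 ≤ K) (h : 2 - (a + b) ≤ K * (a' + b')) :
    ε ^ (m - 1) * (2 - a ^ m - b ^ m) ≤ 2 * (m * K) ^ m * √(a' ^ 2 + b' ^ 2) ^ m + 2 * ε ^ m := by
  have hA : 2 - a ^ m - b ^ m ≤ 2 * (m * K * √(a' ^ 2 + b' ^ 2)) := by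
    have hu := one_sub_rpow_le_mul_one_sub ha hm
    have hv := one_sub_rpow_le_mul_one_sub hb hm
    calc 2 - a ^ m - b ^ m ≤ m * (2 - (a + b)) := by linarith
      _ ≤ m * (K * (2 * √(a' ^ 2 + b' ^ 2))) := by
        gcongr
        exact h.trans (by gcongr; exact add_le_two_mul_sqrt_sq_add_sq _ _)
      _ = _ := by ring
  calc ε ^ (m - 1) * (2 - a ^ m - b ^ m)
      ≤ 2 * (2 * (m * K * √(a' ^ 2 + b' ^ 2)) / 2) ^ m + 2 * ε ^ m :=
        rpow_sub_one_mul_le_of_le hm hε hA (by positivity)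
    _ = 2 * (m * K) ^ m * √(a' ^ 2 + b' ^ 2) ^ m + 2 * ε ^ m := by
        rw [mul_div_cancel_left₀ _ two_ne_zero, Real.mul_rpow (by positivity) (by positivity)]
        ring

theorem exists_ne_zero_forall_inner_eq_zero {F : Type*} [NormedAddCommGroup F]
    [InnerProductSpace ℝ F] [FiniteDimensional ℝ F] {k : ℕ} (hk : k < Module.finrank ℝ F)
    (v : Fin k → F) : ∃ ζ ≠ 0, ∀ i, inner ℝ ζ (v i) = 0 := by
  let f : F →ₗ[ℝ] Fin k → ℝ := LinearMap.pi fun i => innerₛₗ ℝ (v i)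
  obtain ⟨ζ, hζ, hζ0⟩ := Submodule.exists_mem_ne_zero_of_ne_bot
    (LinearMap.ker_ne_bot_of_finrank_lt (f := f) (by simpa using hk))
  exact ⟨ζ, hζ0, fun i => (real_inner_comm _ _).trans (congrFun (LinearMap.mem_ker.1 hζ) i)⟩

def mhdV (n : ℕ) : Submodule ℝ (MHDState n) where
  carrier := {x | MHDInV n x}
  add_mem' := by
    rintro x y ⟨hx₁, hx₂, hx₃⟩ ⟨hy₁, hy₂, hy₃⟩
    refine ⟨fun i j => ?_, ?_, fun i j => ?_⟩
    · simp [hx₁ i j, hy₁ i j]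
    · simp [sum_add_distrib, hx₂, hy₂]
    · simp only [Prod.snd_add, PiLp.add_apply, hx₃ i j, hy₃ i j]
      ring
  zero_mem' := ⟨fun _ _ => rfl, by simp, fun _ _ => by simp⟩
  smul_mem' := by
    rintro c x ⟨hx₁, hx₂, hx₃⟩
    refine ⟨fun i j => ?_, ?_, fun i j => ?_⟩
    · simp [hx₁ i j]
    · simp [← mul_sum, hx₂]
    · simp [hx₃ i j]

theorem MHDU_eq_interiorIn (n : ℕ) :
    MHDU n = interiorIn ((mhdV n).comap (LinearMap.fst ℝ _ ℝ))
      (convexHull ℝ (MHDK n) ×ˢ Set.Icc (-1) 1) := rfl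

theorem MHDBdry_eq_boundaryIn (n : ℕ) :
    MHDBdry n = boundaryIn ((mhdV n).comap (LinearMap.fst ℝ _ ℝ))
      (convexHull ℝ (MHDK n) ×ˢ Set.Icc (-1) 1) := rfl

theorem sum_mul_self_eq_one_of_norm_eq_one {n : ℕ} {v : EuclideanSpace ℝ (Fin n)} (hv : ‖v‖ = 1) :
    ∑ i, v i * v i = 1 := by
  simpa [sq, hv] using (EuclideanSpace.real_norm_sq_eq v).symm

theorem MHDK_subset_mhdV (n : ℕ) : MHDK n ⊆ mhdV n := by
  rintro x ⟨hu, hb, hM, hQ⟩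
  refine ⟨fun i j => by rw [hM, hM]; ring, ?_, fun i j => by rw [hQ, hQ]; ring⟩
  simp only [hM, sum_sub_distrib, sum_mul_self_eq_one_of_norm_eq_one hu,
    sum_mul_self_eq_one_of_norm_eq_one hb, sub_self]

noncomputable def mhdSeminorm (n : ℕ) : Seminorm ℝ (MHDState n) :=
  (normSeminorm ℝ _).comp (LinearMap.fst ℝ _ _) +
    (normSeminorm ℝ _).comp ((LinearMap.fst ℝ _ _).comp (LinearMap.snd ℝ _ _))

@[simp]
theorem mhdSeminorm_apply {n : ℕ} (x : MHDState n) : mhdSeminorm n x = ‖x.1‖ + ‖x.2.1‖ := rfl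

theorem mhdSeminorm_eq_two_of_mem_MHDK {n : ℕ} {k : MHDState n} (hk : k ∈ MHDK n) :
    mhdSeminorm n k = 2 := by
  rw [mhdSeminorm_apply, hk.1, hk.2.1]; norm_num

theorem mhdSeminorm_le_two_of_mem_convexHull {n : ℕ} {x : MHDState n}
    (hx : x ∈ convexHull ℝ (MHDK n)) : mhdSeminorm n x ≤ 2 := by
  have hK : MHDK n ⊆ (mhdSeminorm n).closedBall 0 2 := by
    rintro k ⟨hu, hb, -⟩
    simp only [Seminorm.mem_closedBall, sub_zero, mhdSeminorm_apply, hu, hb]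
    norm_num
  simpa using convexHull_min hK ((mhdSeminorm n).convex_closedBall 0 2) hx

theorem mhdSeminorm_lt_two_of_mem_MHDU {n : ℕ} {z : MHDState n × ℝ} (hz : z ∈ MHDU n) :
    mhdSeminorm n z.1 < 2 := by
  rw [MHDU_eq_interiorIn] at hz
  obtain ⟨ε, hε, hzε⟩ := exists_one_add_smul_mem_of_mem_interiorIn hz
  have := mhdSeminorm_le_two_of_mem_convexHull hzε.1
  rw [Prod.smul_fst, map_smul_eq_mul, Real.norm_of_nonneg (by linarith)] at this
  nlinarith [apply_nonneg (mhdSeminorm n) z.1]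

theorem MHDK_mulVec_eq_neg_smul {n : ℕ} {k : MHDState n} (hk : k ∈ MHDK n)
    {ζ : EuclideanSpace ℝ (Fin n)} {s : ℝ} (hu : ∑ j, k.1 j * ζ j = -s)
    (hb : ∑ j, k.2.1 j * ζ j = 0) (i : Fin n) :
    ∑ j, k.2.2.1 (i, j) * ζ j = -s * k.1 i ∧ ∑ j, k.2.2.2 (i, j) * ζ j = -s * k.2.1 i := by
  obtain ⟨-, -, hM, hQ⟩ := hk
  simp only [hM, hQ, sub_mul, mul_assoc, sum_sub_distrib, ← mul_sum, hu, hb]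
  constructor <;> ring

theorem MHDLambda_smul_sub {n : ℕ} (hn : 4 ≤ n) {k₁ k₂ : MHDState n} (hk₁ : k₁ ∈ MHDK n)
    (hk₂ : k₂ ∈ MHDK n) (r : ℝ) : MHDLambda n (r • (k₁ - k₂), 0) := by
  obtain ⟨ζ, hζ, hζv⟩ := exists_ne_zero_forall_inner_eq_zero (k := 3)
    (by rw [finrank_euclideanSpace_fin]; omega) ![k₁.1 - k₂.1, k₁.2.1, k₂.2.1]
  have hb₁ : ∑ j, k₁.2.1 j * ζ j = 0 := by simpa [PiLp.inner_apply] using hζv 1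
  have hb₂ : ∑ j, k₂.2.1 j * ζ j = 0 := by simpa [PiLp.inner_apply] using hζv 2
  have hu₂ : ∑ j, k₂.1 j * ζ j = ∑ j, k₁.1 j * ζ j :=
    (sub_eq_zero.1 (by simpa [PiLp.inner_apply, sub_mul, sum_sub_distrib] using hζv 0)).symm
  obtain ⟨s, hu₁⟩ : ∃ s, ∑ j, k₁.1 j * ζ j = -s := ⟨_, (neg_neg _).symm⟩
  rw [hu₁] at hu₂
  refine ⟨ζ, s, fun h => hζ h.1, fun i => ?_, ?_, fun i => ?_, ?_⟩
  · have h₁ := (MHDK_mulVec_eq_neg_smul hk₁ hu₁ hb₁ i).1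
    have h₂ := (MHDK_mulVec_eq_neg_smul hk₂ hu₂ hb₂ i).1
    simp only [Prod.smul_snd, Prod.snd_sub, Prod.smul_fst, Prod.fst_sub, PiLp.smul_apply,
      PiLp.sub_apply, smul_eq_mul, zero_mul, add_zero, sub_mul, mul_assoc, sum_sub_distrib,
      ← mul_sum, h₁, h₂]
    ring
  · simp [mul_sub, sub_mul, mul_assoc, sum_sub_distrib, ← mul_sum, hu₁, hu₂]
  · have h₁ := (MHDK_mulVec_eq_neg_smul hk₁ hu₁ hb₁ i).2
    have h₂ := (MHDK_mulVec_eq_neg_smul hk₂ hu₂ hb₂ i).2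
    simp only [Prod.smul_snd, Prod.snd_sub, Prod.smul_fst, Prod.fst_sub, PiLp.smul_apply,
      PiLp.sub_apply, smul_eq_mul, sub_mul, mul_assoc, sum_sub_distrib, ← mul_sum, h₁, h₂]
    ring
  · simp [mul_sub, sub_mul, mul_assoc, sum_sub_distrib, ← mul_sum, hb₁, hb₂]

theorem add_smul_mem_MHDU_and_half_infDist_le {n : ℕ} {z : MHDState n × ℝ} (hz : z ∈ MHDU n)
    {d : MHDState n} (hd : d ∈ mhdV n)
    (hseg : ∀ c : ℝ, |c| ≤ 2 → z.1 + c • d ∈ convexHull ℝ (MHDK n)) {s : ℝ} (hs : |s| ≤ 1) :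
    z + s • (d, 0) ∈ MHDU n ∧
      1 / 2 * Metric.infDist z (MHDBdry n) ≤ Metric.infDist (z + s • (d, 0)) (MHDBdry n) := by
  rw [MHDU_eq_interiorIn] at hz ⊢
  rw [MHDBdry_eq_boundaryIn]
  refine add_smul_mem_interiorIn_and_half_infDist_le
    ((convex_convexHull ℝ _).prod (convex_Icc _ _)) hz hd (fun c hc => ⟨?_, ?_⟩) hs
  · simpa using hseg c hc
  · simpa using (mem_of_mem_interiorIn hz).2

/-- **Lemma 3.5 (1/2-relaxed local convexity along wave-cone directions).** For `n ≥ 4` and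
`m ∈ (1, ∞)` there is `C₀ = C₀(n,m) > 0` such that every `z = (u,b,M,Q,q) ∈ 𝒰` admits a
nonzero wave-cone direction `z̄ = (ū,b̄,M̄,Q̄,0) ∈ Λ` for which the segment
`σ = {z + s z̄ : |s| ≤ 1}` lies in `𝒰` with `dist(σ,∂𝒰) ≥ (1/2) dist(z,∂𝒰)`, and for every
`ε ∈ (0,1)` one has `ε^{m−1}(2 − |u|^m − |b|^m) ≤ C₀ |(ū,b̄)|^m + 2 ε^m`. -/
theorem relaxed_local_convexity (n : ℕ) (hn : 4 ≤ n) (m : ℝ) (hm : 1 < m) :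
    ∃ C₀ : ℝ, 0 < C₀ ∧
      ∀ z : MHDState n × ℝ, z ∈ MHDU n →
        ∃ zbar : MHDState n × ℝ, zbar ≠ 0 ∧ zbar.2 = 0 ∧ MHDInV n zbar.1 ∧
          MHDLambda n zbar ∧
          (∀ s : ℝ, |s| ≤ 1 → z + s • zbar ∈ MHDU n ∧
            (1 / 2) * Metric.infDist z (MHDBdry n)
              ≤ Metric.infDist (z + s • zbar) (MHDBdry n)) ∧
          (∀ ε : ℝ, 0 < ε → ε < 1 →
            ε ^ (m - 1) * (2 - ‖z.1.1‖ ^ m - ‖z.1.2.1‖ ^ m)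
              ≤ C₀ * (Real.sqrt (‖zbar.1.1‖ ^ 2 + ‖zbar.1.2.1‖ ^ 2)) ^ m
                + 2 * ε ^ m) := by
  set N : ℝ := Module.finrank ℝ (MHDState n) + 1
  refine ⟨2 * (m * (2 * N ^ 2)) ^ m, by positivity, fun z hz => ?_⟩
  have hzK := (mem_of_mem_interiorIn (MHDU_eq_interiorIn n ▸ hz)).1
  obtain ⟨k₁, hk₁, k₂, hk₂, t, ht, hspread, hseg⟩ := exists_pair_segment_mem_convexHull
    (mhdSeminorm n) (fun _ => mhdSeminorm_eq_two_of_mem_MHDK) hzK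
  set d : MHDState n := (t / 2) • (k₁ - k₂)
  have hkey : 2 - mhdSeminorm n z.1 ≤ 2 * N ^ 2 * mhdSeminorm n d := by
    rw [map_smul_eq_mul, Real.norm_of_nonneg (by positivity)]
    linarith
  have hd : d ∈ mhdV n :=
    (mhdV n).smul_mem _ (sub_mem (MHDK_subset_mhdV n hk₁) (MHDK_subset_mhdV n hk₂))
  refine ⟨(d, 0), ?_, rfl, hd, MHDLambda_smul_sub hn hk₁ hk₂ _,
    fun s hs => add_smul_mem_MHDU_and_half_infDist_le hz hd (fun c hc => ?_) hs,
    fun ε hε _ => rpow_sub_one_mul_two_sub_rpow_sub_rpow_le hm.le hε (norm_nonneg _)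
      (norm_nonneg _) (by positivity) hkey⟩
  · intro h
    have := mhdSeminorm_lt_two_of_mem_MHDU hz
    rw [show d = 0 from congrArg Prod.fst h, map_zero] at hkey
    linarith
  · rw [smul_smul]
    refine hseg _ ?_
    rw [abs_mul, abs_of_pos (half_pos ht)]
    exact (mul_le_mul_of_nonneg_right hc (half_pos ht).le).trans_eq (by ring)
end

section
/- Let X be a real normed vector space, let U ⊂ X be an open convex set, let z ∈ U, and let z̄ ∈ X be such that z + s z̄ belongs to the closure of U for every real s with |s| ≤ 2. Then for every s with |s| ≤ 1, the distance from z + s z̄ to the complement of U satisfies dist(z + s z̄, X \ U) ≥ (1/2) dist(z, X \ U). In particular, the segment σ = { z + s z̄ : |s| ≤ 1 } is contained in U with dist(σ, ∂U) ≥ (1/2) dist(z, ∂U). -/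
/-! The point `z + s • z̄` is the midpoint of `z ∈ U` and `z + 2 s • z̄ ∈ closure U`. For convex `U`,
the homothety with centre `y ∈ closure U` and ratio `a ∈ (0, 1]` maps every ball contained in `U`
into `interior U`, so `a • x + (1 - a) • y` is at distance at least `a · dist(x, Uᶜ)` from `Uᶜ`. -/

open Metric

namespace Convex

variable {E : Type*} [NormedAddCommGroup E] [NormedSpace ℝ E] {U : Set E} {x y : E} {a b r : ℝ}

theorem ball_combo_subset_interior (hU : Convex ℝ U) (hball : ball x r ⊆ U)
    (hy : y ∈ closure U) (ha : 0 < a) (hb : 0 ≤ b) (hab : a + b = 1) :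
    ball (a • x + b • y) (a * r) ⊆ interior U := by
  intro p hp
  have hpq : a • (a⁻¹ • (p - b • y)) + b • y = p := by simp [smul_smul, ha.ne']
  have hq : a⁻¹ • (p - b • y) ∈ interior U := by
    refine interior_maximal hball isOpen_ball ?_
    have hqx : a⁻¹ • (p - b • y) - x = a⁻¹ • (p - (a • x + b • y)) := by
      rw [smul_sub a⁻¹ p (a • x + b • y), smul_add, smul_smul, inv_mul_cancel₀ ha.ne', one_smul,
        smul_sub]
      abel
    rw [mem_ball, dist_eq_norm, hqx, norm_smul, norm_inv, Real.norm_of_nonneg ha.le,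
      inv_mul_lt_iff₀ ha, ← dist_eq_norm]
    exact hp
  exact hpq ▸ hU.combo_interior_closure_mem_interior hq hy ha hb hab

theorem mul_infDist_compl_le_infDist_combo (hU : Convex ℝ U) (hy : y ∈ closure U)
    (ha : 0 < a) (hb : 0 ≤ b) (hab : a + b = 1) :
    a * infDist x Uᶜ ≤ infDist (a • x + b • y) Uᶜ := by
  rcases Uᶜ.eq_empty_or_nonempty with hempty | hne
  · simp [hempty]
  rw [le_infDist hne]
  intro w hw
  by_contra! hlt
  have hball := hU.ball_combo_subset_interior (ball_infDist_compl_subset (x := x)) hy ha hb hab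
  exact hw (interior_subset (hball (mem_ball'.2 hlt)))

end Convex

/-- **Geometric lemma behind relaxed local convexity (Lemma 3.2/3.5).** Let `U` be an open
convex set in a real normed space, `z ∈ U`, and suppose `z + s z̄ ∈ closure U` for all
`|s| ≤ 2`. Then for all `|s| ≤ 1` the point `z + s z̄` lies in `U` and
`dist(z + s z̄, X \ U) ≥ (1/2) dist(z, X \ U)`; in particular the segment
`σ = {z + s z̄ : |s| ≤ 1}` lies in `U` with `dist(σ, ∂U) ≥ (1/2) dist(z, ∂U)`. -/
theorem segment_dist_to_boundary {X : Type*} [NormedAddCommGroup X] [NormedSpace ℝ X]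
    (U : Set X) (hU : IsOpen U) (hconv : Convex ℝ U) (z : X) (hz : z ∈ U) (zbar : X)
    (hseg : ∀ s : ℝ, |s| ≤ 2 → z + s • zbar ∈ closure U) :
    ∀ s : ℝ, |s| ≤ 1 → z + s • zbar ∈ U ∧
      (1 / 2) * Metric.infDist z Uᶜ ≤ Metric.infDist (z + s • zbar) Uᶜ := by
  intro s hs
  have hfar : z + (2 * s) • zbar ∈ closure U := by
    apply hseg
    rw [abs_mul, abs_two]
    linarith
  have hmid : (1 / 2 : ℝ) • z + (1 / 2 : ℝ) • (z + (2 * s) • zbar) = z + s • zbar := by module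
  have hhalf : (0 : ℝ) < 1 / 2 := by norm_num
  rw [← hmid]
  refine ⟨?_, hconv.mul_infDist_compl_le_infDist_combo hfar hhalf hhalf.le (by norm_num)⟩
  rw [← hU.interior_eq] at hz ⊢
  exact hconv.combo_interior_closure_mem_interior hz hfar hhalf hhalf.le (by norm_num)
end
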